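/- Let G be a graph with κ(G) ≥ 5 and let H be a subgraph of G isomorphic to K_{2,3} such that the two 3-valent vertices of H are not adjacent in G. Then G contains an induced path P whose ends are the two 3-valent vertices of H, which meets no 2-valent vertex of H, and such that some P-bridge of G meets at least two of the 2-valent vertices of H. -/

import Mathlib

open SimpleGraph

/-! ### Basic notions: subdivisions, planarity (via Kuratowski), connectivity -/

/-- A realization of a subdivision of `H` inside `G` whose branch vertices are
given by the injective map `b`: for every edge of `H` there is a path of `G`
between the corresponding branch vertices, these paths are internally disjoint
and internally avoid the branch vertices. -/
def SubdivWith {α V : Type*} (H : SimpleGraph α) (G : SimpleGraph V) (b : α → V) : Prop :=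
  Function.Injective b ∧
  ∃ P : ∀ i j : α, H.Adj i j → G.Walk (b i) (b j),
    (∀ i j (h : H.Adj i j), (P i j h).IsPath) ∧
    (∀ i j (h : H.Adj i j), ∀ v ∈ (P i j h).support, v ∈ Set.range b → v = b i ∨ v = b j) ∧
    (∀ i j k l (h : H.Adj i j) (h' : H.Adj k l), s(i, j) ≠ s(k, l) →
      ∀ v, v ∈ (P i j h).support → v ∈ (P k l h').support → v ∈ Set.range b)

/-- `G` contains a subdivision of `H` (as a subgraph). -/
def ContainsSubdiv {α V : Type*} (H : SimpleGraph α) (G : SimpleGraph V) : Prop :=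
  ∃ b : α → V, SubdivWith H G b

/-- `G` contains a `TK₅`, i.e. a subdivision of `K₅`. -/
def ContainsTK5 {V : Type*} (G : SimpleGraph V) : Prop :=
  ContainsSubdiv (⊤ : SimpleGraph (Fin 5)) G

/-- `G` contains a `TK₃,₃`, i.e. a subdivision of `K₃,₃`. -/
def ContainsTK33 {V : Type*} (G : SimpleGraph V) : Prop :=
  ContainsSubdiv (completeBipartiteGraph (Fin 3) (Fin 3)) G

/-- Planarity of a graph, rendered combinatorially through Kuratowski's
characterization: a graph is planar iff it contains no subdivision of `K₅`
and no subdivision of `K₃,₃`. -/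
def IsPlanar {V : Type*} (G : SimpleGraph V) : Prop :=
  ¬ ContainsTK5 G ∧ ¬ ContainsTK33 G

/-- `κ(G[A]) ≥ k` : the subgraph of `G` induced on `A` is `k`-connected:
`A` has more than `k` vertices and removing fewer than `k` vertices of `A`
leaves the induced subgraph connected. -/
def KConnOn {V : Type*} (G : SimpleGraph V) (A : Set V) (k : ℕ) : Prop :=
  k < A.ncard ∧ ∀ s : Set V, s ⊆ A → s.ncard < k → (G.induce (A \ s)).Connected

/-- `κ(G) ≥ k` : `G` is `k`-connected. -/
def KConn {V : Type*} (G : SimpleGraph V) (k : ℕ) : Prop :=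
  KConnOn G Set.univ k

/-- The vertex connectivity `κ(G)`. -/
noncomputable def kappa {V : Type*} (G : SimpleGraph V) : ℕ :=
  sSup {k : ℕ | KConn G k}

/-- A stable (independent) set of vertices. -/
def StableSet {V : Type*} (G : SimpleGraph V) (s : Set V) : Prop :=
  ∀ u ∈ s, ∀ v ∈ s, ¬ G.Adj u v

/-- `a` is an apex vertex of `G` : `G - a` is planar. -/
def IsApexVertex {V : Type*} (G : SimpleGraph V) (a : V) : Prop :=
  IsPlanar (G.induce {a}ᶜ)

/-- `G` is an apex graph. -/
def IsApexGraph {V : Type*} (G : SimpleGraph V) : Prop :=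
  ∃ a, IsApexVertex G a

/-- `P` is an induced path of `G` (as a walk that is a path whose vertex set
spans no further edges of `G`). -/
def IsInducedPathW {V : Type*} (G : SimpleGraph V) {x y : V} (P : G.Walk x y) : Prop :=
  P.IsPath ∧ ∀ u v, u ∈ P.support → v ∈ P.support → G.Adj u v → s(u, v) ∈ P.edges

/-- `B` is (the vertex set of) a nontrivial bridge of `S` in `G`, i.e. a
connected component of `G - S`. -/
def IsBridgeComp {V : Type*} (G : SimpleGraph V) (S : Set V) (B : Set V) : Prop :=
  B.Nonempty ∧ (∀ v ∈ B, v ∉ S) ∧ (G.induce B).Connected ∧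
  ∀ u ∈ B, ∀ v, G.Adj u v → v ∉ S → v ∈ B

/-! ### Blocks, cutvertices, chains of blocks (relative to a vertex set `A`) -/

/-- `B ⊆ V` induces a connected subgraph. -/
def ConnOn {V : Type*} (G : SimpleGraph V) (B : Set V) : Prop :=
  B.Nonempty ∧ (G.induce B).Connected

/-- `B` induces a `2`-connected subgraph in the block sense: connected, and
no single vertex of `B` disconnects it (a single edge counts). -/
def BiconnOn {V : Type*} (G : SimpleGraph V) (B : Set V) : Prop :=
  ConnOn G B ∧ ∀ v ∈ B, (B \ {v}).Nonempty → (G.induce (B \ {v})).Connected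

/-- `B` is (the vertex set of) a block of the subgraph of `G` induced on `A`:
a maximal subset of `A` inducing a `2`-connected subgraph (or an edge). -/
def IsBlockOf {V : Type*} (G : SimpleGraph V) (A B : Set V) : Prop :=
  B ⊆ A ∧ BiconnOn G B ∧ ∀ B', B' ⊆ A → BiconnOn G B' → B ⊆ B' → B = B'

/-- `v` is a cutvertex of the (connected) subgraph of `G` induced on `A`. -/
def IsCutvertexOf {V : Type*} (G : SimpleGraph V) (A : Set V) (v : V) : Prop :=
  v ∈ A ∧ (G.induce A).Connected ∧ ¬ (G.induce (A \ {v})).Connected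

/-- `B` is a leaf block of the subgraph of `G` induced on `A` : a block
containing at most one cutvertex. -/
def IsLeafBlockOf {V : Type*} (G : SimpleGraph V) (A B : Set V) : Prop :=
  IsBlockOf G A B ∧ {v ∈ B | IsCutvertexOf G A v}.Subsingleton

/-- The block `B` of the subgraph of `G` induced on `A` meets `S` internally:
`S` contains a vertex of `B` that is not a cutvertex. -/
def MeetsInternally {V : Type*} (G : SimpleGraph V) (A B S : Set V) : Prop :=
  ∃ v ∈ B ∩ S, ¬ IsCutvertexOf G A v

/-- The subgraph of `G` induced on `A` is a chain of blocks: its block tree is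
a path, i.e. it is connected, every cutvertex lies in exactly two blocks and
every block contains at most two cutvertices. -/
def IsChainOfBlocks {V : Type*} (G : SimpleGraph V) (A : Set V) : Prop :=
  (G.induce A).Connected ∧
  (∀ v, IsCutvertexOf G A v → {B : Set V | IsBlockOf G A B ∧ v ∈ B}.ncard = 2) ∧
  (∀ B, IsBlockOf G A B → {v ∈ B | IsCutvertexOf G A v}.ncard ≤ 2)

/-! ### Hammocks -/

/-- The boundary of a subgraph `H` of `G` : vertices of `H` incident with an
edge of `G` not in `H`. -/
def hammockBoundary {V : Type*} (G : SimpleGraph V) (H : G.Subgraph) : Set V :=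
  {v | v ∈ H.verts ∧ ∃ w, G.Adj v w ∧ s(v, w) ∉ H.edgeSet}

/-- `H` is a `k`-hammock of `G` : a connected subgraph whose boundary has
exactly `k` vertices. -/
def IsHammock {V : Type*} (G : SimpleGraph V) (H : G.Subgraph) (k : ℕ) : Prop :=
  H.Connected ∧ (hammockBoundary G H).ncard = k

/-- The cone over `G` with base `B` : a new vertex joined to every member of `B`. -/
def coneOver {W : Type*} (G : SimpleGraph W) (B : Set W) : SimpleGraph (Option W) where
  Adj a b :=
    Option.elim a (Option.elim b False (fun v => v ∈ B))
      (fun u => Option.elim b (u ∈ B) (fun v => G.Adj u v))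
  symm := by
    constructor
    rintro (_ | u) (_ | v) h
    · simp only [Option.elim] at h
    · exact h
    · exact h
    · exact G.adj_symm h
  loopless := by
    constructor
    rintro (_ | u) h
    · simp only [Option.elim] at h
    · exact G.irrefl h

/-- `G` has an embedding in the closed disc with the vertices of `B` on the
boundary of the disc; combinatorially: the cone over `G` with base `B` is
planar. -/
def DiscEmbeddable {W : Type*} (G : SimpleGraph W) (B : Set W) : Prop :=
  IsPlanar (coneOver G B)

/-- `H` is a planar hammock of `G` : a `5`-hammock with `|V(G)| > |V(H)| ≥ 7`
embeddable in the closed disc with its boundary vertices on the disc boundary. -/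
def IsPlanarHammock {V : Type*} [Fintype V] (G : SimpleGraph V) (H : G.Subgraph) : Prop :=
  IsHammock G H 5 ∧ 7 ≤ H.verts.ncard ∧ H.verts.ncard < Fintype.card V ∧
  DiscEmbeddable H.coe {v : H.verts | (v : V) ∈ hammockBoundary G H}

/-! ### Rooted subdivisions, small subgraphs, circuits -/

/-- `G` contains a `TK₄` rooted at `W` : a subdivision of `K₄` whose branch
vertices are exactly the members of `W`. -/
def ContainsTK4RootedAt {V : Type*} (G : SimpleGraph V) (W : Set V) : Prop :=
  ∃ b : Fin 4 → V, Set.range b = W ∧ SubdivWith (⊤ : SimpleGraph (Fin 4)) G b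

/-- `G` contains `K₂,₃` as a subgraph. -/
def ContainsK23 {V : Type*} (G : SimpleGraph V) : Prop :=
  ∃ x₁ x₂ x₃ x₄ x₅ : V, [x₁, x₂, x₃, x₄, x₅].Pairwise (· ≠ ·) ∧
    G.Adj x₁ x₃ ∧ G.Adj x₁ x₄ ∧ G.Adj x₁ x₅ ∧ G.Adj x₂ x₃ ∧ G.Adj x₂ x₄ ∧ G.Adj x₂ x₅

/-- `G` contains `K₄⁻` (`K₄` minus an edge) as a subgraph. -/
def ContainsK4minus {V : Type*} (G : SimpleGraph V) : Prop :=
  ∃ a b c d : V, [a, b, c, d].Pairwise (· ≠ ·) ∧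
    G.Adj a b ∧ G.Adj a c ∧ G.Adj a d ∧ G.Adj b c ∧ G.Adj b d

/-- `C` is a facial circuit of the (4-connected plane) graph `G`; by Tutte's
theorem these are exactly the induced nonseparating circuits. -/
def IsFacialCircuit {V : Type*} (G : SimpleGraph V) {a : V} (C : G.Walk a a) : Prop :=
  C.IsCycle ∧ (∀ u v, u ∈ C.support → v ∈ C.support → G.Adj u v → s(u, v) ∈ C.edges) ∧
  (G.induce {v | v ∈ C.support}ᶜ).Connected

/-! ### Frames -/

/-- The subgraph `G(X,F)` of a frame `(X,F)` : vertex set `X ∪ V(F)`, edge set `F`. -/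
def frameSubgraph {V : Type*} (G : SimpleGraph V) (X : Set V) (F : Set (Sym2 V)) :
    G.Subgraph where
  verts := X ∪ {v | ∃ e ∈ F, v ∈ e}
  Adj u v := s(u, v) ∈ F ∧ G.Adj u v
  adj_sub h := h.2
  edge_vert := fun {v w} h => Or.inr ⟨s(v, w), h.1, Sym2.mem_mk_left v w⟩
  symm := ⟨fun u v h => ⟨by rw [Sym2.eq_swap]; exact h.1, h.2.symm⟩⟩

/-- `H` is a `U`-hammock : a `2`-hammock of `G` containing at most one element
of `U = UV ∪ UE`. -/
def IsUHammock {V : Type*} (G : SimpleGraph V) (UV : Set V) (UE : Set (Sym2 V))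
    (H : G.Subgraph) : Prop :=
  IsHammock G H 2 ∧ (UV ∩ H.verts).ncard + (UE ∩ H.edgeSet).ncard ≤ 1

/-- Conditions (A.1)–(A.3) of the definition of a `U`-frame, for a collection
`B` of `U`-hammocks. -/
def FrameConds {V : Type*} (G : SimpleGraph V) (UV : Set V) (UE : Set (Sym2 V))
    (X : Set V) (F : Set (Sym2 V)) (B : Set G.Subgraph) : Prop :=
  (∀ H ∈ B, IsUHammock G UV UE H) ∧
  -- `G` is the union of `G(X,F)` and the members of `B`
  (frameSubgraph G X F ⊔ sSup B = ⊤) ∧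
  -- (A.1) each member of `B` has its two ends in distinct components of `G(X,F)`
  (∀ H ∈ B, ∃ (a b : V) (ha : a ∈ (frameSubgraph G X F).verts)
      (hb : b ∈ (frameSubgraph G X F).verts),
      a ≠ b ∧ hammockBoundary G H = {a, b} ∧
      ¬ (frameSubgraph G X F).coe.Reachable ⟨a, ha⟩ ⟨b, hb⟩) ∧
  -- (A.2) exactly three members of `B` meet `U`, and each vertex of `U` is
  -- interior to some member of `B`
  ({H ∈ B | (UV ∩ H.verts).Nonempty ∨ (UE ∩ H.edgeSet).Nonempty}.ncard = 3) ∧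
  (∀ u ∈ UV, ∃ H ∈ B, u ∈ H.verts \ hammockBoundary G H) ∧
  -- (A.3)
  X.ncard ≤ 2 ∧ (X = ∅ → B.ncard = 3)

/-- `(X, F)` is a `U`-frame of `G`. -/
def IsUFrame {V : Type*} (G : SimpleGraph V) (UV : Set V) (UE : Set (Sym2 V))
    (X : Set V) (F : Set (Sym2 V)) : Prop :=
  F ⊆ G.edgeSet ∧ (∀ e ∈ F, ∀ x ∈ X, x ∉ e) ∧
  Nat.card (frameSubgraph G X F).coe.ConnectedComponent = 2 ∧
  ∃ B : Set G.Subgraph, FrameConds G UV UE X F B ∧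
    -- (A.4) maximality of the collection `B`
    ∀ B' : Set G.Subgraph, FrameConds G UV UE X F B' →
      (∀ H ∈ B, ∃ H' ∈ B', H ≤ H') → B = B'

/-! ### Multigraphs -/

/-- The simple graph underlying the multigraph with edge-end map `ends`,
restricted to the edges outside `F`. -/
def Multi.simpleAvoiding {V E : Type*} (ends : E → Sym2 V) (F : Set E) :
    SimpleGraph V where
  Adj u v := u ≠ v ∧ ∃ e, e ∉ F ∧ ends e = s(u, v)
  symm := by
    constructor
    rintro u v ⟨h, e, he, hee⟩
    exact ⟨h.symm, e, he, hee.trans Sym2.eq_swap⟩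
  loopless := ⟨fun v h => h.1 rfl⟩

/-- The simple graph underlying the multigraph with edge-end map `ends`. -/
def Multi.simple {V E : Type*} (ends : E → Sym2 V) : SimpleGraph V :=
  Multi.simpleAvoiding ends ∅

/-- The multigraph with edge-end map `ends` has a circuit containing all
vertices of `AV` and all edges of `AE` : a cyclic sequence of `n ≥ 2` distinct
vertices and `n` distinct edges, consecutive vertices joined by the
corresponding edge. -/
def Multi.HasACircuit {V E : Type*} (ends : E → Sym2 V) (AV : Set V) (AE : Set E) : Prop :=
  ∃ n : ℕ, 2 ≤ n ∧ ∃ (vtx : ZMod n → V) (edg : ZMod n → E),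
    Function.Injective vtx ∧ Function.Injective edg ∧
    (∀ i, ends (edg i) = s(vtx i, vtx (i + 1))) ∧
    (∀ v ∈ AV, ∃ i, vtx i = v) ∧ (∀ e ∈ AE, ∃ i, edg i = e)

/-- `AE` is (the edge set of) a claw `K₁,₃` in the multigraph: three edges
sharing exactly one common endpoint and otherwise pairwise disjoint. -/
def Multi.IsClaw {V E : Type*} (ends : E → Sym2 V) (AE : Set E) : Prop :=
  ∃ (c x y z : V) (e₁ e₂ e₃ : E), [x, y, z].Pairwise (· ≠ ·) ∧
    c ∉ ({x, y, z} : Set V) ∧ AE = {e₁, e₂, e₃} ∧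
    ends e₁ = s(c, x) ∧ ends e₂ = s(c, y) ∧ ends e₃ = s(c, z)

/-!
Since `κ(G) ≥ 5`, the graph `G - {x₃, x₄, x₅}` is `2`-connected, so by Whitney's theorem it
contains two internally disjoint `x₁`-`x₂` paths `P` and `Q`, which may be taken induced.
If `x₃, x₄, x₅` lie in three different components of `G - P`, the interior of `Q` lies in at most
one of them, so two of these vertices, `a` and `b`, have components in `G - P` disjoint from `Q`.
As `G - {x₁, x₂}` is connected, each of these components has a neighbour in the interior of `P`,
which is connected and disjoint from `Q`; hence `a` and `b` lie in one component of `G - Q`.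
-/

lemma Set.exists_ne_notMem_of_subsingleton {α : Type*} {Y Z : Set α} (hY : 2 < Y.ncard)
    (hZ : Z.Subsingleton) : ∃ a ∈ Y, ∃ b ∈ Y, a ≠ b ∧ a ∉ Z ∧ b ∉ Z := by
  have hYfin : Y.Finite := Set.finite_of_ncard_pos (by omega)
  have hZ₁ : Z.ncard ≤ 1 := by
    have := hZ.finite.to_subtype
    exact Set.ncard_le_one_iff_subsingleton.mpr hZ
  have hdiff := Set.le_ncard_sdiff Z Y hZ.finite
  obtain ⟨a, b, ha, hb, hab⟩ := (Set.one_lt_ncard_iff (hYfin.sdiff (t := Z))).mp (by omega)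
  exact ⟨a, ha.1, b, hb.1, hab, ha.2, hb.2⟩

namespace SimpleGraph

variable {V : Type*} {G : SimpleGraph V} {u v w x y z : V}

def ReachableAvoiding (G : SimpleGraph V) (S : Set V) (u v : V) : Prop :=
  ∃ p : G.Walk u v, ∀ x ∈ p.support, x ∉ S

namespace ReachableAvoiding

variable {S T : Set V}

lemma refl (hu : u ∉ S) : G.ReachableAvoiding S u u :=
  ⟨.nil, by simpa using hu⟩

lemma symm (h : G.ReachableAvoiding S u v) : G.ReachableAvoiding S v u := by
  obtain ⟨p, hp⟩ := h
  exact ⟨p.reverse, by simpa using hp⟩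

lemma trans (h : G.ReachableAvoiding S u v) (h' : G.ReachableAvoiding S v w) :
    G.ReachableAvoiding S u w := by
  obtain ⟨p, hp⟩ := h
  obtain ⟨q, hq⟩ := h'
  refine ⟨p.append q, fun x hx => ?_⟩
  rcases (p.mem_support_append_iff q).mp hx with hx | hx
  exacts [hp x hx, hq x hx]

lemma left_notMem (h : G.ReachableAvoiding S u v) : u ∉ S :=
  h.elim fun p hp => hp u p.start_mem_support

lemma right_notMem (h : G.ReachableAvoiding S u v) : v ∉ S :=
  h.elim fun p hp => hp v p.end_mem_support

lemma of_adj (h : G.ReachableAvoiding S u v) (hvw : G.Adj v w) (hw : w ∉ S) :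
    G.ReachableAvoiding S u w :=
  h.trans ⟨hvw.toWalk, by simp [h.right_notMem, hw]⟩

lemma of_mem_support {p : G.Walk u v} (hp : ∀ x ∈ p.support, x ∉ S) (hw : w ∈ p.support) :
    G.ReachableAvoiding S u w := by
  classical
  exact ⟨p.takeUntil w hw, fun x hx => hp x (p.support_takeUntil_subset_support hw hx)⟩

lemma of_forall_not_reachableAvoiding (h : G.ReachableAvoiding S u v)
    (hT : ∀ t ∈ T, ¬ G.ReachableAvoiding S u t) : G.ReachableAvoiding T u v := by
  obtain ⟨p, hp⟩ := h
  exact ⟨p, fun x hx hxT => hT x hxT (of_mem_support hp hx)⟩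

lemma exists_adj_mem_diff {E : Set V} {a b : V} (h : G.ReachableAvoiding E a b)
    (ha : a ∉ S) (hab : ¬ G.ReachableAvoiding S a b) :
    ∃ e d, G.ReachableAvoiding S a e ∧ G.Adj e d ∧ d ∈ S \ E := by
  obtain ⟨p, hp⟩ := h
  obtain ⟨d, hd, hd₁, hd₂⟩ := p.exists_boundary_dart {x | G.ReachableAvoiding S a x} (refl ha) hab
  have hdE : d.snd ∉ E := hp _ (p.dart_snd_mem_support_of_mem_darts hd)
  by_cases hdS : d.snd ∈ S
  · exact ⟨d.fst, d.snd, hd₁, d.adj, hdS, hdE⟩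
  · exact absurd (of_adj hd₁ d.adj hdS) hd₂

end ReachableAvoiding

lemma isBridgeComp_setOf_reachableAvoiding {S : Set V} {a : V} (ha : a ∉ S) :
    IsBridgeComp G S {v | G.ReachableAvoiding S a v} := by
  refine ⟨⟨a, .refl ha⟩, fun v hv => hv.right_notMem, ?_, fun u hu v huv hv => hu.of_adj huv hv⟩
  refine G.induce_connected_of_patches a (.refl ha) fun {v} ⟨p, hp⟩ => ?_
  exact ⟨{x | x ∈ p.support}, fun x hx => .of_mem_support hp hx, p.start_mem_support,
    p.end_mem_support, p.connected_induce_support.preconnected _ _⟩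

def BridgeMeetsTwo (G : SimpleGraph V) (S Y : Set V) : Prop :=
  ∃ B, IsBridgeComp G S B ∧ 2 ≤ (Y ∩ B).ncard

lemma bridgeMeetsTwo_of_reachableAvoiding {S Y : Set V} (hY : Y.Finite) {a b : V} (ha : a ∈ Y)
    (hb : b ∈ Y) (hab : a ≠ b) (h : G.ReachableAvoiding S a b) : G.BridgeMeetsTwo S Y := by
  refine ⟨_, isBridgeComp_setOf_reachableAvoiding h.left_notMem, ?_⟩
  calc 2 = ({a, b} : Set V).ncard := (Set.ncard_pair hab).symm
    _ ≤ (Y ∩ {v | G.ReachableAvoiding S a v}).ncard :=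
      Set.ncard_le_ncard (Set.insert_subset ⟨ha, .refl h.left_notMem⟩
        (Set.singleton_subset_iff.mpr ⟨hb, h⟩)) (hY.inter_of_left _)

lemma _root_.KConn.reachableAvoiding {k : ℕ} (h : KConn G k) {S : Set V} (hS : S.ncard < k)
    (hu : u ∉ S) (hv : v ∉ S) :
    G.ReachableAvoiding S u v := by
  obtain ⟨p⟩ := (h.2 S (Set.subset_univ S) hS).preconnected ⟨u, trivial, hu⟩ ⟨v, trivial, hv⟩
  refine ⟨p.map (Embedding.induce _).toHom, fun x hx => ?_⟩
  obtain ⟨y, -, rfl⟩ := List.mem_map.mp ((p.support_map _) ▸ hx)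
  exact y.2.2

namespace Walk

lemma mem_edges_of_length_eq_one : ∀ {p : G.Walk u v}, p.length = 1 → s(u, v) ∈ p.edges
  | cons _ nil, _ => by simp

lemma exists_shorter_of_adj_start (p : G.Walk u y) (hv : v ∈ p.support) (huv : G.Adj u v)
    (he : s(u, v) ∉ p.edges) : ∃ q : G.Walk u y, q.length < p.length ∧ q.support ⊆ p.support := by
  classical
  refine ⟨cons huv (p.dropUntil v hv), ?_, ?_⟩
  · have hsplit := congrArg length (p.take_spec hv)
    have hlong : 2 ≤ (p.takeUntil v hv).length := by
      by_contra! hshort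
      interval_cases hlen : (p.takeUntil v hv).length
      · exact huv.ne (eq_of_length_eq_zero hlen)
      · exact he (p.edges_takeUntil_subset_edges hv (mem_edges_of_length_eq_one hlen))
    rw [length_append] at hsplit
    rw [length_cons]
    omega
  · rw [support_cons, List.cons_subset]
    exact ⟨p.start_mem_support, p.support_dropUntil_subset_support hv⟩

lemma exists_shorter_of_chord (p : G.Walk x y) (hu : u ∈ p.support) (hv : v ∈ p.support)
    (huv : G.Adj u v) (he : s(u, v) ∉ p.edges) :
    ∃ q : G.Walk x y, q.length < p.length ∧ q.support ⊆ p.support := by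
  classical
  have hsplit := p.take_spec hu
  set p₁ := p.takeUntil u hu
  set p₂ := p.dropUntil u hu
  have hlen : p.length = p₁.length + p₂.length := by rw [← hsplit, length_append]
  have he₁ : s(u, v) ∉ p₁.edges := fun h => he (p.edges_takeUntil_subset_edges hu h)
  have he₂ : s(u, v) ∉ p₂.edges := fun h => he (p.edges_dropUntil_subset_edges hu h)
  by_cases hv₂ : v ∈ p₂.support
  · obtain ⟨q, hql, hqs⟩ := exists_shorter_of_adj_start p₂ hv₂ huv he₂
    refine ⟨p₁.append q, by rw [length_append]; omega, ?_⟩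
    intro z hz
    rcases (p₁.mem_support_append_iff q).mp hz with hz | hz
    · exact p.support_takeUntil_subset_support hu hz
    · exact p.support_dropUntil_subset_support hu (hqs hz)
  · have hv₁ : v ∈ p₁.reverse.support := by
      rw [support_reverse, List.mem_reverse]
      rw [← hsplit, mem_support_append_iff] at hv
      exact hv.resolve_right hv₂
    obtain ⟨q, hql, hqs⟩ :=
      exists_shorter_of_adj_start p₁.reverse hv₁ huv (by rwa [edges_reverse, List.mem_reverse])
    rw [length_reverse] at hql
    refine ⟨q.reverse.append p₂, by rw [length_append, length_reverse]; omega, ?_⟩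
    intro z hz
    rcases (q.reverse.mem_support_append_iff p₂).mp hz with hz | hz
    · rw [support_reverse, List.mem_reverse] at hz
      have := hqs hz
      rw [support_reverse, List.mem_reverse] at this
      exact p.support_takeUntil_subset_support hu this
    · exact p.support_dropUntil_subset_support hu hz

/-- A shortest walk from `x` to `y` within the vertices of `p` is an induced path. -/
lemma exists_isInducedPathW_support_subset (p : G.Walk x y) :
    ∃ q : G.Walk x y, IsInducedPathW G q ∧ q.support ⊆ p.support := by
  classical
  have hex : ∃ n, ∃ q : G.Walk x y, q.support ⊆ p.support ∧ q.length = n :=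
    ⟨_, p, List.Subset.refl _, rfl⟩
  obtain ⟨q, hqp, hqn⟩ := Nat.find_spec hex
  have hmin : ∀ r : G.Walk x y, r.support ⊆ p.support → q.length ≤ r.length :=
    fun r hr => hqn ▸ Nat.find_min' hex ⟨r, hr, rfl⟩
  have hbp : q.bypass.support ⊆ p.support := List.Subset.trans q.support_bypass_subset_support hqp
  refine ⟨q.bypass, ⟨q.bypass_isPath, fun a b ha hb hab => ?_⟩, hbp⟩
  by_contra he
  obtain ⟨r, hrl, hrs⟩ := exists_shorter_of_chord q.bypass ha hb hab he
  have := hmin r (List.Subset.trans hrs hbp)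
  have := q.length_bypass_le_length
  omega

lemma IsPath.append {p : G.Walk u v} {q : G.Walk v w} (hp : p.IsPath) (hq : q.IsPath)
    (hpq : ∀ z ∈ p.support, z ∈ q.support → z = v) : (p.append q).IsPath := by
  refine IsPath.mk' ?_
  rw [support_append, List.nodup_append]
  have hq' := hq.support_nodup
  rw [← cons_tail_support q, List.nodup_cons] at hq'
  refine ⟨hp.support_nodup, hq'.2, fun a ha b hb hab => ?_⟩
  subst hab
  have := hpq a ha (List.mem_of_mem_tail hb)
  subst this
  exact hq'.1 hb

lemma IsPath.exists_prefix_first_mem {p : G.Walk u v} (hp : p.IsPath) {T : Set V} (hv : v ∈ T) :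
    ∃ z ∈ T, ∃ q : G.Walk u z, q.IsPath ∧ q.support ⊆ p.support ∧
      ∀ t ∈ q.support, t ∈ T → t = z := by
  induction p with
  | nil => exact ⟨_, hv, Walk.nil, .nil, List.Subset.refl _, by simp⟩
  | @cons a b c h p ih =>
    rw [cons_isPath_iff] at hp
    by_cases ha : a ∈ T
    · exact ⟨a, ha, Walk.nil, .nil, by simp, by simp⟩
    obtain ⟨z, hz, q, hq, hqp, hqT⟩ := ih hp.1 hv
    refine ⟨z, hz, cons h q, hq.cons fun h' => hp.2 (hqp h'), ?_, ?_⟩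
    · rw [support_cons, support_cons]
      exact List.cons_subset_cons _ hqp
    · intro t ht htT
      rw [support_cons, List.mem_cons] at ht
      rcases ht with rfl | ht
      exacts [absurd htT ha, hqT t ht htT]

lemma IsPath.reachableAvoiding_of_mem_support {p : G.Walk x y} (hp : p.IsPath) {T : Set V}
    (hT : ∀ z ∈ p.support, z ∈ T → z = y) (hs : v ∈ p.support) (hsy : v ≠ y) :
    G.ReachableAvoiding T x v := by
  classical
  refine ⟨p.takeUntil v hs, fun z hz hzT => ?_⟩
  have := hT z (p.support_takeUntil_subset_support hs hz) hzT
  subst this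
  exact endpoint_notMem_support_takeUntil hp hs hsy.symm hz

lemma IsPath.reachableAvoiding_interior {p : G.Walk x y} (hp : p.IsPath) {T : Set V}
    (hT : ∀ z ∈ p.support, z ∈ T → z = x ∨ z = y) {s t : V}
    (hs : s ∈ p.support) (hs' : s ∉ ({x, y} : Set V))
    (ht : t ∈ p.support) (ht' : t ∉ ({x, y} : Set V)) : G.ReachableAvoiding T s t := by
  simp only [Set.mem_insert_iff, Set.mem_singleton_iff, not_or] at hs' ht'
  cases p with
  | nil => exact absurd (by simpa using hs) hs'.1
  | cons h p' =>
    rw [cons_isPath_iff] at hp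
    have hT' : ∀ z ∈ p'.support, z ∈ T → z = y := fun z hz hzT =>
      (hT z (by simp [hz]) hzT).resolve_left fun hzx => hp.2 (hzx ▸ hz)
    have hs'' : s ∈ p'.support := by simpa [hs'.1] using hs
    have ht'' : t ∈ p'.support := by simpa [ht'.1] using ht
    exact (hp.1.reachableAvoiding_of_mem_support hT' hs'' hs'.2).symm.trans
      (hp.1.reachableAvoiding_of_mem_support hT' ht'' ht'.2)

def InternallyDisjoint (p q : G.Walk u v) : Prop :=
  ∀ x ∈ p.support, x ∈ q.support → x = u ∨ x = v

lemma InternallyDisjoint.symm {p q : G.Walk u v} (h : p.InternallyDisjoint q) :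
    q.InternallyDisjoint p :=
  fun x hq hp => h x hp hq

end Walk

/-- Extending two internally disjoint `u`-`w` paths to `v ∼ w`: one path gets the edge `wv`,
the other is cut at the first vertex `z` where a path `W` from `v` avoiding `w` reaches them. -/
lemma exists_internallyDisjoint_extend {X : Set V} {P₁ P₂ : G.Walk u w}
    (h₁ : P₁.IsPath) (h₂ : P₂.IsPath) (hX₁ : ∀ x ∈ P₁.support, x ∉ X)
    (hX₂ : ∀ x ∈ P₂.support, x ∉ X) (hP : P₁.InternallyDisjoint P₂)
    (hwv : G.Adj w v) (huv : u ≠ v) {W : G.Walk v z} (hW : W.IsPath)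
    (hWX : ∀ x ∈ W.support, x ∉ insert w X) (hz : z ∈ P₁.support)
    (hWP : ∀ x ∈ W.support, x ∈ P₁.support ∨ x ∈ P₂.support → x = z) :
    ∃ p q : G.Walk u v, p.IsPath ∧ q.IsPath ∧ (∀ x ∈ p.support, x ∉ X) ∧
      (∀ x ∈ q.support, x ∉ X) ∧ p.InternallyDisjoint q := by
  classical
  have hzw : z ≠ w := fun h => hWX z W.end_mem_support (h ▸ Set.mem_insert _ _)
  have hvX : v ∉ X := fun h => hWX v W.start_mem_support (Set.mem_insert_of_mem _ h)
  have hv₂ : v ∉ P₂.support := fun hv => by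
    have hvz := hWP v W.start_mem_support (Or.inr hv)
    rcases hP v (hvz ▸ hz) hv with h | h
    exacts [huv h.symm, hwv.ne h.symm]
  have hw₁ : w ∉ (P₁.takeUntil z hz).support :=
    Walk.endpoint_notMem_support_takeUntil h₁ hz hzw.symm
  refine ⟨(P₁.takeUntil z hz).append W.reverse, P₂.concat hwv, ?_, h₂.concat hv₂ hwv, ?_, ?_, ?_⟩
  · refine (h₁.takeUntil hz).append hW.reverse fun x hx hxW => ?_
    rw [Walk.support_reverse, List.mem_reverse] at hxW
    exact hWP x hxW (Or.inl (P₁.support_takeUntil_subset_support hz hx))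
  · intro x hx
    rcases (Walk.mem_support_append_iff _ _).mp hx with hx | hx
    · exact hX₁ x (P₁.support_takeUntil_subset_support hz hx)
    · rw [Walk.support_reverse, List.mem_reverse] at hx
      exact fun h => hWX x hx (Set.mem_insert_of_mem _ h)
  · intro x hx
    rw [Walk.support_concat, List.mem_append, List.mem_singleton] at hx
    rcases hx with hx | rfl
    exacts [hX₂ x hx, hvX]
  · intro x hxp hxq
    rw [Walk.support_concat, List.mem_append, List.mem_singleton] at hxq
    rcases hxq with hxq | rfl
    · rcases (Walk.mem_support_append_iff _ _).mp hxp with hx | hx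
      · refine (hP x (P₁.support_takeUntil_subset_support hz hx) hxq).imp_right fun h => ?_
        exact absurd (h ▸ hx) hw₁
      · rw [Walk.support_reverse, List.mem_reverse] at hx
        obtain rfl := hWP x hx (Or.inr hxq)
        exact (hP x hz hxq).imp_right fun h => absurd h hzw
    · exact Or.inr rfl

/-- Whitney's theorem for the `2`-connected graph `G - X`. -/
theorem exists_internallyDisjoint_paths {X : Set V}
    (hconn : ∀ w u v, u ∉ insert w X → v ∉ insert w X → G.ReachableAvoiding (insert w X) u v)
    (huv : u ≠ v) (h : G.ReachableAvoiding X u v) :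
    ∃ p q : G.Walk u v, p.IsPath ∧ q.IsPath ∧ (∀ x ∈ p.support, x ∉ X) ∧
      (∀ x ∈ q.support, x ∉ X) ∧ p.InternallyDisjoint q := by
  classical
  obtain ⟨p, hp⟩ := h
  induction p using Walk.concatRec with
  | Hnil => exact absurd rfl huv
  | @Hconcat u w v p hwv ih =>
    have hpX : ∀ x ∈ p.support, x ∉ X := fun x hx => hp x (by simp [Walk.support_concat, hx])
    have hvX : v ∉ X := hp v (by simp [Walk.support_concat])
    have huX : u ∉ X := hpX u p.start_mem_support
    by_cases huw : u = w
    · subst huw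
      refine ⟨hwv.toWalk, hwv.toWalk, .of_adj hwv, .of_adj hwv, ?_, ?_, fun x hx _ => ?_⟩ <;>
        simp_all
    obtain ⟨P₁, P₂, h₁, h₂, hX₁, hX₂, hP⟩ := ih huw hpX
    obtain ⟨W₀, hW₀⟩ := hconn w v u (by simp [hvX, hwv.ne.symm]) (by simp [huX, huw])
    obtain ⟨z, hz, W, hW, hWW₀, hWP⟩ := W₀.bypass_isPath.exists_prefix_first_mem
      (T := {x | x ∈ P₁.support ∨ x ∈ P₂.support}) (Or.inl P₁.start_mem_support)
    have hWX : ∀ x ∈ W.support, x ∉ insert w X :=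
      fun x hx => hW₀ x (W₀.support_bypass_subset_support (hWW₀ hx))
    rcases hz with hz | hz
    · exact exists_internallyDisjoint_extend h₁ h₂ hX₁ hX₂ hP hwv huv hW hWX hz hWP
    · exact exists_internallyDisjoint_extend h₂ h₁ hX₂ hX₁ hP.symm hwv huv hW hWX hz
        fun x hx h => hWP x hx h.symm

theorem exists_internallyDisjoint_inducedPaths {X : Set V}
    (hconn : ∀ w u v, u ∉ insert w X → v ∉ insert w X → G.ReachableAvoiding (insert w X) u v)
    (hxy : x ≠ y) (h : G.ReachableAvoiding X x y) :
    ∃ P Q : G.Walk x y, IsInducedPathW G P ∧ IsInducedPathW G Q ∧ (∀ z ∈ P.support, z ∉ X) ∧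
      (∀ z ∈ Q.support, z ∉ X) ∧ P.InternallyDisjoint Q := by
  obtain ⟨p, q, -, -, hpX, hqX, hpq⟩ := exists_internallyDisjoint_paths hconn hxy h
  obtain ⟨P, hP, hPp⟩ := p.exists_isInducedPathW_support_subset
  obtain ⟨Q, hQ, hQq⟩ := q.exists_isInducedPathW_support_subset
  exact ⟨P, Q, hP, hQ, fun z hz => hpX z (hPp hz), fun z hz => hqX z (hQq hz),
    fun z hzP hzQ => hpq z (hPp hzP) (hQq hzQ)⟩

/-- The components of `a` and `b` in `G - S` attach to `S \ E`, which is connected in `G - T`. -/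
lemma reachableAvoiding_of_not_reachableAvoiding {S T E : Set V} (hES : E ⊆ S)
    (hST : S ∩ T ⊆ E) (hS : ∀ s ∈ S \ E, ∀ t ∈ S \ E, G.ReachableAvoiding T s t)
    (hE : ∀ u v, u ∉ E → v ∉ E → G.ReachableAvoiding E u v)
    {a b : V} (haS : a ∉ S) (hbS : b ∉ S) (hab : ¬ G.ReachableAvoiding S a b)
    (haT : ∀ t ∈ T, ¬ G.ReachableAvoiding S a t) (hbT : ∀ t ∈ T, ¬ G.ReachableAvoiding S b t) :
    G.ReachableAvoiding T a b := by
  have attach : ∀ c c', c ∉ S → c' ∉ S → ¬ G.ReachableAvoiding S c c' →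
      (∀ t ∈ T, ¬ G.ReachableAvoiding S c t) → ∃ d ∈ S \ E, G.ReachableAvoiding T c d := by
    intro c c' hc hc' hcc' hcT
    obtain ⟨e, d, hce, hed, hd⟩ :=
      (hE c c' (fun h => hc (hES h)) (fun h => hc' (hES h))).exists_adj_mem_diff hc hcc'
    exact ⟨d, hd, (hce.of_forall_not_reachableAvoiding hcT).of_adj hed
      fun hdT => hd.2 (hST ⟨hd.1, hdT⟩)⟩
  obtain ⟨d, hd, had⟩ := attach a b haS hbS hab haT
  obtain ⟨d', hd', hbd'⟩ := attach b a hbS haS (fun h => hab h.symm) hbT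
  exact had.trans ((hS d hd d' hd').trans hbd'.symm)

theorem bridgeMeetsTwo_or_of_internallyDisjoint {P Q : G.Walk x y} (hP : P.IsPath)
    (hQ : Q.IsPath) (hPQ : P.InternallyDisjoint Q)
    (hconn : ∀ u v, u ∉ ({x, y} : Set V) → v ∉ ({x, y} : Set V) →
      G.ReachableAvoiding {x, y} u v)
    {Y : Set V} (hY : 2 < Y.ncard) (hYP : ∀ a ∈ Y, a ∉ P.support) :
    G.BridgeMeetsTwo {v | v ∈ P.support} Y ∨ G.BridgeMeetsTwo {v | v ∈ Q.support} Y := by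
  set SP : Set V := {v | v ∈ P.support}
  have hYfin : Y.Finite := Set.finite_of_ncard_pos (by omega)
  refine or_iff_not_imp_left.mpr fun hPbad => ?_
  have hsep : ∀ a ∈ Y, ∀ b ∈ Y, G.ReachableAvoiding SP a b → a = b := fun a ha b hb h =>
    by_contra fun hab => hPbad (bridgeMeetsTwo_of_reachableAvoiding hYfin ha hb hab h)
  have hES : ({x, y} : Set V) ⊆ SP :=
    Set.insert_subset P.start_mem_support (Set.singleton_subset_iff.mpr P.end_mem_support)
  obtain ⟨a, ha, b, hb, hab, haQ, hbQ⟩ := Set.exists_ne_notMem_of_subsingleton hY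
    (Z := {a ∈ Y | ∃ t ∈ Q.support, G.ReachableAvoiding SP a t}) <| by
    rintro a ⟨ha, t, ht, hat⟩ b ⟨hb, t', ht', hbt'⟩
    have htt' : G.ReachableAvoiding SP t t' :=
      hQ.reachableAvoiding_interior (fun z hzQ hzP => hPQ z hzP hzQ) ht
        (fun h => hat.right_notMem (hES h)) ht' (fun h => hbt'.right_notMem (hES h))
    exact hsep a ha b hb (hat.trans (htt'.trans hbt'.symm))
  refine bridgeMeetsTwo_of_reachableAvoiding hYfin ha hb hab <|
    reachableAvoiding_of_not_reachableAvoiding hES (fun z hz => hPQ z hz.1 hz.2)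
      (fun s hs t ht => hP.reachableAvoiding_interior hPQ hs.1 hs.2 ht.1 ht.2) hconn
      (hYP a ha) (hYP b hb) (fun h => hab (hsep a ha b hb h))
      (fun t ht h => haQ ⟨ha, t, ht, h⟩) (fun t ht h => hbQ ⟨hb, t, ht, h⟩)

end SimpleGraph

theorem statement_3_general {V : Type} (G : SimpleGraph V)
    (h5 : KConn G 5)
    (x₁ x₂ x₃ x₄ x₅ : V)
    (hdist : [x₁, x₂, x₃, x₄, x₅].Pairwise (· ≠ ·)) :
    ∃ P : G.Walk x₁ x₂, IsInducedPathW G P ∧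
      x₃ ∉ P.support ∧ x₄ ∉ P.support ∧ x₅ ∉ P.support ∧
      ∃ B, IsBridgeComp G {v | v ∈ P.support} B ∧
        2 ≤ (({x₃, x₄, x₅} : Set V) ∩ B).ncard := by
  simp only [List.pairwise_cons, List.mem_cons, List.not_mem_nil, forall_eq_or_imp] at hdist
  obtain ⟨⟨h12, h13, h14, h15, -⟩, ⟨h23, h24, h25, -⟩, ⟨h34, h35, -⟩, ⟨h45, -⟩, -⟩ := hdist
  set X : Set V := {x₃, x₄, x₅}
  have hX : X.ncard = 3 := Set.ncard_eq_three.mpr ⟨x₃, x₄, x₅, h34, h35, h45, rfl⟩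
  have hx₁ : x₁ ∉ X := by simp [X, h13, h14, h15]
  have hx₂ : x₂ ∉ X := by simp [X, h23, h24, h25]
  obtain ⟨P, Q, hP, hQ, hPX, hQX, hPQ⟩ := exists_internallyDisjoint_inducedPaths
    (fun w u v hu hv => h5.reachableAvoiding ((Set.ncard_insert_le w X).trans_lt (by omega)) hu hv)
    h12 (h5.reachableAvoiding (by omega) hx₁ hx₂)
  have hends : ∀ u v, u ∉ ({x₁, x₂} : Set V) → v ∉ ({x₁, x₂} : Set V) →
      G.ReachableAvoiding {x₁, x₂} u v :=
    fun u v hu hv => h5.reachableAvoiding (by rw [Set.ncard_pair h12]; omega) hu hv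
  have hgood : ∀ R : G.Walk x₁ x₂, IsInducedPathW G R → (∀ z ∈ R.support, z ∉ X) →
      G.BridgeMeetsTwo {v | v ∈ R.support} X → ∃ P : G.Walk x₁ x₂, IsInducedPathW G P ∧
        x₃ ∉ P.support ∧ x₄ ∉ P.support ∧ x₅ ∉ P.support ∧
        ∃ B, IsBridgeComp G {v | v ∈ P.support} B ∧ 2 ≤ (X ∩ B).ncard :=
    fun R hR hRX hB => ⟨R, hR, fun h => hRX _ h (by simp [X]), fun h => hRX _ h (by simp [X]),
      fun h => hRX _ h (by simp [X]), hB⟩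
  rcases bridgeMeetsTwo_or_of_internallyDisjoint hP.1 hQ.1 hPQ hends (by omega)
    (fun a ha haP => hPX a haP ha) with h | h
  exacts [hgood P hP hPX h, hgood Q hQ hQX h]

theorem statement_3 {V : Type} [Fintype V] (G : SimpleGraph V)
    (h5 : KConn G 5)
    (x₁ x₂ x₃ x₄ x₅ : V)
    (hdist : [x₁, x₂, x₃, x₄, x₅].Pairwise (· ≠ ·))
    (e₁₃ : G.Adj x₁ x₃) (e₁₄ : G.Adj x₁ x₄) (e₁₅ : G.Adj x₁ x₅)
    (e₂₃ : G.Adj x₂ x₃) (e₂₄ : G.Adj x₂ x₄) (e₂₅ : G.Adj x₂ x₅)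
    (hnadj : ¬ G.Adj x₁ x₂) :
    ∃ P : G.Walk x₁ x₂, IsInducedPathW G P ∧
      x₃ ∉ P.support ∧ x₄ ∉ P.support ∧ x₅ ∉ P.support ∧
      ∃ B, IsBridgeComp G {v | v ∈ P.support} B ∧
        2 ≤ (({x₃, x₄, x₅} : Set V) ∩ B).ncard :=
  statement_3_general G h5 x₁ x₂ x₃ x₄ x₅ hdist
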